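/- arXiv:math/0407082 — 2 statements merged into one kernel-verified Lean document; each statement's English description precedes it below -/
import Mathlib

section
/- Let R be a ring, let n ≥ 0, and let M_0, M_1, …, M_{n+1} and N_0, N_1, …, N_n be R-modules with M_{n+1} = 0. Suppose given R-linear maps s_i : M_{i+1} → M_i and θ_i : N_i → M_i for 0 ≤ i ≤ n such that for each i the map M_{i+1} ⊕ N_i → M_i, (m, x) ↦ s_i(m) + θ_i(x), is an isomorphism. Then the R-linear map ⨁_{i=0}^{n} N_i → M_0 whose i-th component is the composite θ'_i = s_0 ∘ s_1 ∘ ⋯ ∘ s_{i−1} ∘ θ_i (with θ'_0 = θ_0) is an isomorphism. -/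
/-- The composite `s_0 ∘ s_1 ∘ ⋯ ∘ s_(i-1) : M_i →ₗ[R] M_0`
(equal to the identity when `i = 0`). -/
def compS {R : Type*} [Ring R] (M : ℕ → Type*)
    [∀ i, AddCommGroup (M i)] [∀ i, Module R (M i)]
    (s : ∀ i, M (i + 1) →ₗ[R] M i) : ∀ i, M i →ₗ[R] M 0
  | 0 => LinearMap.id
  | (i + 1) => (compS M s i).comp (s i)

/-!
Induction on the length of the filtration. Under `M_1 ⊕ N_0 ≅ M_0` the map `⨁_{i ≤ n} N_i → M_0`
becomes the corresponding map `⨁_{1 ≤ i ≤ n} N_i → M_1` of the shifted filtration, direct sum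
the identity of `N_0`; for a filtration of length zero it is the empty sum onto `M_0 = 0`.
-/

section

variable {R : Type*} [Ring R]
  (M : ℕ → Type*) [∀ i, AddCommGroup (M i)] [∀ i, Module R (M i)]
  (N : ℕ → Type*) [∀ i, AddCommGroup (N i)] [∀ i, Module R (N i)]
  (s : ∀ i, M (i + 1) →ₗ[R] M i) (θ : ∀ i, N i →ₗ[R] M i)

theorem compS_succ' :
    ∀ i, compS M s (i + 1) = (s 0).comp (compS (fun j => M (j + 1)) (fun j => s (j + 1)) i)
  | 0 => rfl
  | i + 1 => by rw [compS, compS_succ' i]; rfl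

theorem lsum_compS_comp_cons (k : ℕ) (a : N 0) (t : ∀ i : Fin k, N (i + 1)) :
    LinearMap.lsum R (fun i : Fin (k + 1) => N i) ℕ (fun i => (compS M s i).comp (θ i))
        (Fin.cons a t : ∀ i : Fin (k + 1), N i) =
      (s 0).coprod (θ 0)
        (LinearMap.lsum R (fun i : Fin k => N (i + 1)) ℕ
          (fun i => (compS (fun j => M (j + 1)) (fun j => s (j + 1)) i).comp (θ (i + 1))) t, a) := by
  simp only [LinearMap.lsum_apply, Fin.sum_univ_succ, Fin.coe_ofNat_eq_mod, Nat.zero_mod,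
    Fin.val_succ, compS_succ', LinearMap.add_apply, LinearMap.coe_sum, LinearMap.coe_comp,
    LinearMap.coe_proj, Finset.sum_apply, Function.comp_apply, Function.eval,
    LinearMap.coprod_apply, map_sum]
  exact add_comm _ _

theorem bijective_lsum_compS_comp (k : ℕ) (hM : Subsingleton (M k))
    (hsplit : ∀ i < k, Function.Bijective ((s i).coprod (θ i))) :
    Function.Bijective
      (LinearMap.lsum R (fun i : Fin k => N i) ℕ (fun i => (compS M s i).comp (θ i))) := by
  induction k generalizing M N s θ with
  | zero => exact ⟨Function.injective_of_subsingleton _, fun y => ⟨0, Subsingleton.elim _ _⟩⟩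
  | succ k ih =>
    have hrest := ih (fun j => M (j + 1)) (fun j => N (j + 1)) (fun j => s (j + 1))
      (fun j => θ (j + 1)) hM (fun i hi => hsplit (i + 1) (by omega))
    set e := (Equiv.prodComm _ _).trans (Fin.consEquiv fun i : Fin (k + 1) => N i)
    have hcomp : _ ∘ e = (s 0).coprod (θ 0) ∘ Prod.map _ id :=
      funext fun ⟨t, a⟩ => lsum_compS_comp_cons M N s θ k a t
    rw [← e.bijective_comp, hcomp]
    exact (hsplit 0 k.succ_pos).comp (hrest.prodMap Function.bijective_id)

end

/-- Given modules `M_0, …, M_(n+1)` with `M_(n+1) = 0` and `N_0, …, N_n`,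
and isomorphisms `M_(i+1) ⊕ N_i ≅ M_i`, `(m, x) ↦ s_i m + θ_i x`,
the map `⨁_(i=0)^n N_i → M_0` whose `i`-th component is
`θ'_i = s_0 ∘ ⋯ ∘ s_(i-1) ∘ θ_i` is an isomorphism. -/
theorem stmt_1 {R : Type*} [Ring R] (n : ℕ)
    (M : ℕ → Type*) [∀ i, AddCommGroup (M i)] [∀ i, Module R (M i)]
    (N : ℕ → Type*) [∀ i, AddCommGroup (N i)] [∀ i, Module R (N i)]
    (hM : Subsingleton (M (n + 1)))
    (s : ∀ i, M (i + 1) →ₗ[R] M i)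
    (θ : ∀ i, N i →ₗ[R] M i)
    (hsplit : ∀ i, i ≤ n → Function.Bijective ((s i).coprod (θ i))) :
    Function.Bijective
      (LinearMap.lsum R (fun i : Fin (n + 1) => N i.1) ℕ
        (fun i : Fin (n + 1) => (compS M s i.1).comp (θ i.1))) :=
  bijective_lsum_compS_comp M N s θ (n + 1) hM fun i hi => hsplit i (Nat.lt_succ_iff.mp hi)
end

section
/- Let k be a field, let E be a k-vector space of finite dimension n, let V ≤ E be a subspace of dimension n − 1, and let U ≤ V be a subspace of dimension d − 1, where 1 ≤ d ≤ n. Then the set { W ≤ E : dim_k W = d and W ∩ V = U } of d-dimensional subspaces of E meeting V exactly in U is in bijection with the quotient vector space V ⧸ U; in particular it is in bijection with a k-vector space of dimension n − d. -/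
open Module

/-- Let `E` be an `n`-dimensional vector space over a field `k`, `V ≤ E` a subspace of
dimension `n - 1`, and `U ≤ V` a subspace of dimension `d - 1`, where `1 ≤ d ≤ n`.
Then the set of `d`-dimensional subspaces `W ≤ E` with `W ∩ V = U` is in bijection
with the quotient vector space `V ⧸ U`, a `k`-vector space of dimension `n - d`. -/
theorem stmt_4 {k E : Type*} [Field k] [AddCommGroup E] [Module k E]
    [FiniteDimensional k E] {n d : ℕ}
    (hd : 1 ≤ d) (hn : d ≤ n)
    (hE : finrank k E = n)
    (V : Submodule k E) (hV : finrank k V = n - 1)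
    (U : Submodule k E) (hUV : U ≤ V) (hU : finrank k U = d - 1) :
    Nonempty
      ({W : Submodule k E // finrank k W = d ∧ W ⊓ V = U} ≃
        (↥V ⧸ U.comap V.subtype)) ∧
    finrank k (↥V ⧸ U.comap V.subtype) = n - d := by
  classical
  have hn1 : 1 ≤ n := le_trans hd hn
  -- V ≠ ⊤
  have hVne : V ≠ ⊤ := by
    intro h
    rw [h, finrank_top, hE] at hV
    omega
  obtain ⟨e, he⟩ : ∃ e : E, e ∉ V := by
    by_contra h
    push_neg at h
    exact hVne (Submodule.eq_top_iff'.2 h)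
  -- Key lemma A
  have keyA : ∀ v : E, v ∈ V →
      finrank k ↥(U ⊔ Submodule.span k {e + v}) = d ∧
      (U ⊔ Submodule.span k {e + v}) ⊓ V = U := by
    intro v hv
    have hev : e + v ∉ V := fun h => he (by simpa using V.sub_mem h hv)
    have hevne : e + v ≠ 0 := fun h => hev (h ▸ V.zero_mem)
    have hdisj : U ⊓ Submodule.span k {e + v} = ⊥ := by
      rw [eq_bot_iff]
      rintro x ⟨hxU, hxs⟩
      obtain ⟨c, rfl⟩ := Submodule.mem_span_singleton.1 hxs
      rcases eq_or_ne c 0 with rfl | hc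
      · simp
      · exact absurd ((V.smul_mem_iff hc).1 (hUV hxU)) hev
    have hinf : (U ⊔ Submodule.span k {e + v}) ⊓ V = U := by
      apply le_antisymm
      · rintro x ⟨hxW, hxV⟩
        obtain ⟨u, hu, y, hy, rfl⟩ := Submodule.mem_sup.1 hxW
        obtain ⟨c, rfl⟩ := Submodule.mem_span_singleton.1 hy
        rcases eq_or_ne c 0 with rfl | hc
        · simpa using hu
        · have : c • (e + v) ∈ V := by
            have := V.sub_mem hxV (hUV hu)
            simpa using this
          exact absurd ((V.smul_mem_iff hc).1 this) hev
      · exact le_inf le_sup_left hUV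
    refine ⟨?_, hinf⟩
    have h1 : finrank k ↥(Submodule.span k {e + v}) = 1 := finrank_span_singleton hevne
    have := Submodule.finrank_sup_add_finrank_inf_eq U (Submodule.span k {e + v})
    rw [hdisj, h1, hU] at this
    simp only [finrank_bot] at this
    omega
  -- Key lemma B: every W in the set contains some e + v, v ∈ V
  have keyB : ∀ W : Submodule k E, finrank k W = d → W ⊓ V = U →
      ∃ v ∈ V, e + v ∈ W := by
    intro W hWd hWV
    have hWnle : ¬ W ≤ V := by
      intro h
      have : W ⊓ V = W := inf_eq_left.2 h
      rw [hWV] at this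
      rw [← this, hU] at hWd
      omega
    have htop : W ⊔ V = ⊤ := by
      apply Submodule.eq_top_of_finrank_eq
      have hlt : V < W ⊔ V := lt_of_le_of_ne le_sup_right (by
        intro h
        exact hWnle (h ▸ le_sup_left))
      have := Submodule.finrank_lt_finrank_of_lt hlt
      have hle := Submodule.finrank_le (W ⊔ V)
      rw [hE]
      omega
    have : e ∈ W ⊔ V := htop ▸ Submodule.mem_top
    obtain ⟨w, hw, v', hv', rfl⟩ := Submodule.mem_sup.1 this
    exact ⟨-v', V.neg_mem hv', by simpa using hw⟩
  -- Key lemma C: structure of W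
  have keyC : ∀ W : Submodule k E, finrank k W = d → W ⊓ V = U →
      ∀ v ∈ V, e + v ∈ W → W = U ⊔ Submodule.span k {e + v} := by
    intro W hWd hWV v hv hev
    have hle : U ⊔ Submodule.span k {e + v} ≤ W := by
      apply sup_le
      · exact hWV ▸ inf_le_left
      · rw [Submodule.span_singleton_le_iff_mem]; exact hev
    exact (Submodule.eq_of_le_of_finrank_eq hle (by rw [(keyA v hv).1, hWd])).symm
  set U' := U.comap V.subtype with hU'
  have memU' : ∀ x : V, x ∈ U' ↔ (x : E) ∈ U := fun x => Iff.rfl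
  -- forward map via choice
  have exv : ∀ W : {W : Submodule k E // finrank k W = d ∧ W ⊓ V = U},
      ∃ v : V, e + (v : E) ∈ (W : Submodule k E) := by
    rintro ⟨W, hWd, hWV⟩
    obtain ⟨v, hv, hev⟩ := keyB W hWd hWV
    exact ⟨⟨v, hv⟩, hev⟩
  let φ : {W : Submodule k E // finrank k W = d ∧ W ⊓ V = U} → (↥V ⧸ U') :=
    fun W => Submodule.Quotient.mk (exv W).choose
  have hφ : ∀ W : {W : Submodule k E // finrank k W = d ∧ W ⊓ V = U},
      e + (((exv W).choose : V) : E) ∈ (W : Submodule k E) :=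
    fun W => (exv W).choose_spec
  have hbij : Function.Bijective φ := by
    constructor
    · rintro ⟨W₁, hW₁d, hW₁V⟩ ⟨W₂, hW₂d, hW₂V⟩ h
      simp only [φ] at h
      rw [Submodule.Quotient.eq] at h
      set v₁ := (exv ⟨W₁, hW₁d, hW₁V⟩).choose
      set v₂ := (exv ⟨W₂, hW₂d, hW₂V⟩).choose
      have hdiff : (v₁ : E) - (v₂ : E) ∈ U := h
      have h1 := keyC W₁ hW₁d hW₁V v₁ v₁.2 (hφ ⟨W₁, hW₁d, hW₁V⟩)
      have h2 := keyC W₂ hW₂d hW₂V v₂ v₂.2 (hφ ⟨W₂, hW₂d, hW₂V⟩)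
      have hspan : U ⊔ Submodule.span k {e + (v₁ : E)} = U ⊔ Submodule.span k {e + (v₂ : E)} := by
        apply le_antisymm
        · apply sup_le le_sup_left
          rw [Submodule.span_singleton_le_iff_mem]
          have : e + (v₁ : E) = ((v₁ : E) - (v₂ : E)) + (e + (v₂ : E)) := by abel
          rw [this]
          exact Submodule.add_mem _ (Submodule.mem_sup_left hdiff)
            (Submodule.mem_sup_right (Submodule.mem_span_singleton_self _))
        · apply sup_le le_sup_left
          rw [Submodule.span_singleton_le_iff_mem]
          have : e + (v₂ : E) = ((v₂ : E) - (v₁ : E)) + (e + (v₁ : E)) := by abel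
          rw [this]
          have hneg : (v₂ : E) - (v₁ : E) ∈ U := by
            simpa [neg_sub] using U.neg_mem hdiff
          exact Submodule.add_mem _ (Submodule.mem_sup_left hneg)
            (Submodule.mem_sup_right (Submodule.mem_span_singleton_self _))
      apply Subtype.ext
      show W₁ = W₂
      rw [h1, h2, hspan]
    · intro q
      obtain ⟨v, rfl⟩ := Submodule.Quotient.mk_surjective _ q
      have hA := keyA (v : E) v.2
      refine ⟨⟨U ⊔ Submodule.span k {e + (v : E)}, hA.1, hA.2⟩, ?_⟩
      simp only [φ]
      rw [Submodule.Quotient.eq]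
      set W : {W : Submodule k E // finrank k W = d ∧ W ⊓ V = U} :=
        ⟨U ⊔ Submodule.span k {e + (v : E)}, hA.1, hA.2⟩
      set v' := (exv W).choose
      have hev' : e + (v' : E) ∈ (W : Submodule k E) := hφ W
      have hev : e + (v : E) ∈ (W : Submodule k E) :=
        Submodule.mem_sup_right (Submodule.mem_span_singleton_self _)
      have hmem : (v' : E) - (v : E) ∈ (W : Submodule k E) :=
        by simpa using (W : Submodule k E).sub_mem hev' hev
      have h3 : (v' : E) - (v : E) ∈ (U ⊔ Submodule.span k {e + (v : E)}) ⊓ V :=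
        ⟨hmem, V.sub_mem v'.2 v.2⟩
      rw [hA.2] at h3
      show ((v' - v : V) : E) ∈ U
      simpa using h3
  -- dimension count
  have hU'rank : finrank k U' = d - 1 := by
    rw [← hU]
    exact LinearEquiv.finrank_eq (Submodule.comapSubtypeEquivOfLe hUV)
  have hquot : finrank k (↥V ⧸ U') = n - d := by
    have := Submodule.finrank_quotient_add_finrank U'
    rw [hU'rank, hV] at this
    omega
  exact ⟨⟨Equiv.ofBijective φ hbij⟩, hquot⟩
end
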